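/- For s > 0, x, y, z ∈ ℝ, and ω ∈ ℤ, the ω-th Fourier coefficient (in x) of x ↦ K_s(x,y) K_s(x,z), where K_s(x,y) = e^{s(cos 2π(x−y) − 1)}, equals e^{−2s} I_{|ω|}(2s cos(π(y−z))) e^{−iπω(y+z)}. -/

import Mathlib

open scoped BigOperators
open Real MeasureTheory intervalIntegral

/-- The modified Bessel function of the first kind. -/
noncomputable def besselI (n : ℕ) (z : ℝ) : ℝ :=
  ∑' p : ℕ, (z / 2) ^ (2 * p + n) / ((p.factorial : ℝ) * ((p + n).factorial : ℝ))

lemma orth (m : ℤ) :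
    (∫ x in (0:ℝ)..1, Complex.exp (2 * Real.pi * Complex.I * m * x)) =
      if m = 0 then 1 else 0 := by
  rcases eq_or_ne m 0 with h | h
  · simp [h]
  · have hc : (2 * (Real.pi:ℂ) * Complex.I * m) ≠ 0 := by
      simp [Real.pi_ne_zero, Complex.I_ne_zero, h]
    rw [if_neg h]
    rw [integral_exp_mul_complex hc]
    have h1 : Complex.exp (2 * (Real.pi:ℂ) * Complex.I * m * (1:ℝ)) = 1 := by
      rw [show (2 * (Real.pi:ℂ) * Complex.I * m * (1:ℝ)) = m * (2 * Real.pi * Complex.I) by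
        push_cast; ring]
      exact Complex.exp_int_mul_two_pi_mul_I m
    have h0 : Complex.exp (2 * (Real.pi:ℂ) * Complex.I * m * (0:ℝ)) = 1 := by simp
    rw [h1, h0]
    simp

lemma cospow (k : ℕ) (ω : ℤ) :
    (∫ x in (0:ℝ)..1,
        ((Real.cos (2 * Real.pi * x) : ℝ) : ℂ) ^ k *
          Complex.exp (-(2 * Real.pi * Complex.I * (ω:ℂ) * (x:ℂ)))) =
      (∑ j ∈ Finset.range (k+1),
        if (2 * j : ℤ) = k + ω then (k.choose j : ℂ) else 0) / 2 ^ k := by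
  have hpt : ∀ x : ℝ,
      ((Real.cos (2 * Real.pi * x) : ℝ) : ℂ) ^ k *
          Complex.exp (-(2 * Real.pi * Complex.I * (ω:ℂ) * (x:ℂ))) =
      ∑ j ∈ Finset.range (k+1), ((k.choose j : ℂ) / 2 ^ k) *
          Complex.exp (2 * Real.pi * Complex.I * ((2*(j:ℤ) - k - ω : ℤ) : ℂ) * (x:ℂ)) := by
    intro x
    have hcos : ((Real.cos (2 * Real.pi * x) : ℝ) : ℂ) =
        (Complex.exp (2 * Real.pi * x * Complex.I) +
          Complex.exp (-(2 * Real.pi * x) * Complex.I)) / 2 := by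
      rw [Complex.ofReal_cos]
      rw [← Complex.two_cos]
      push_cast
      ring
    rw [hcos, div_pow, add_pow]
    rw [Finset.sum_div, Finset.sum_mul]
    refine Finset.sum_congr rfl fun j hj => ?_
    rw [← Complex.exp_nat_mul, ← Complex.exp_nat_mul, ← Complex.exp_add]
    have hjk : (j:ℂ) + ((k - j : ℕ):ℂ) = (k:ℂ) := by
      have := Finset.mem_range.mp hj
      push_cast [Nat.cast_sub (by omega : j ≤ k)]
      ring
    have harg : (j:ℂ) * (2 * Real.pi * x * Complex.I) +
        ((k - j : ℕ):ℂ) * (-(2 * Real.pi * x) * Complex.I) +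
        -(2 * Real.pi * Complex.I * (ω:ℂ) * (x:ℂ)) =
        2 * Real.pi * Complex.I * ((2*(j:ℤ) - k - ω : ℤ) : ℂ) * (x:ℂ) := by
      have := Finset.mem_range.mp hj
      push_cast [Nat.cast_sub (by omega : j ≤ k)]
      ring
    rw [← harg]; simp only [Complex.exp_add]
    ring
  rw [intervalIntegral.integral_congr (g := fun x => ∑ j ∈ Finset.range (k+1),
        ((k.choose j : ℂ) / 2 ^ k) *
          Complex.exp (2 * Real.pi * Complex.I * ((2*(j:ℤ) - k - ω : ℤ) : ℂ) * (x:ℂ)))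
        (fun x _ => hpt x)]
  rw [intervalIntegral.integral_finset_sum]
  · rw [Finset.sum_div]
    refine Finset.sum_congr rfl fun j hj => ?_
    rw [intervalIntegral.integral_const_mul, orth]
    rcases eq_or_ne (2*(j:ℤ) - k - ω) 0 with h | h
    · rw [if_pos h, if_pos (by omega), mul_one]
    · rw [if_neg h, if_neg (by omega), mul_zero, zero_div]
  · intro j hj
    apply Continuous.intervalIntegrable
    fun_prop

lemma summable_bessel (n : ℕ) (a : ℝ) :
    Summable (fun p : ℕ => (a / 2) ^ (2 * p + n) / ((p.factorial : ℝ) * ((p + n).factorial : ℝ))) := by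
  apply Summable.of_norm
  have h : ∀ p : ℕ,
      ‖(a / 2) ^ (2 * p + n) / ((p.factorial : ℝ) * ((p + n).factorial : ℝ))‖ ≤
        (|a|/2)^n * (((|a|/2)^2)^p / p.factorial) := by
    intro p
    rw [norm_div, norm_pow]
    have h1 : ‖a / 2‖ = |a| / 2 := by rw [Real.norm_eq_abs, abs_div]; norm_num
    rw [h1]
    have h2 : ‖((p.factorial : ℝ) * ((p + n).factorial : ℝ))‖ =
        (p.factorial : ℝ) * ((p + n).factorial : ℝ) := by
      rw [Real.norm_eq_abs, abs_of_pos]; positivity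
    rw [h2]
    have hfac : (p.factorial : ℝ) ≤ (p.factorial : ℝ) * ((p + n).factorial : ℝ) := by
      nth_rewrite 1 [← mul_one (p.factorial : ℝ)]
      apply mul_le_mul_of_nonneg_left _ (by positivity)
      exact_mod_cast Nat.one_le_iff_ne_zero.mpr (Nat.factorial_ne_zero _)
    have hle : (|a|/2)^(2*p+n) / ((p.factorial : ℝ) * ((p + n).factorial : ℝ)) ≤
        (|a|/2)^(2*p+n) / (p.factorial : ℝ) := by
      apply div_le_div_of_nonneg_left (by positivity) (by positivity) hfac
    refine hle.trans_eq ?_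
    rw [pow_add, pow_mul]
    ring
  apply Summable.of_nonneg_of_le (fun p => norm_nonneg _) h
  exact ((Real.summable_pow_div_factorial ((|a|/2)^2)).mul_left _)

lemma besselI_complex (n : ℕ) (a : ℝ) :
    ((besselI n a : ℝ) : ℂ) =
      ∑' p : ℕ, ((a:ℂ) / 2) ^ (2 * p + n) / ((p.factorial : ℂ) * ((p + n).factorial : ℂ)) := by
  rw [besselI, Complex.ofReal_tsum]
  congr 1; ext p; push_cast; ring

lemma innerSum (ω : ℤ) (p : ℕ) :
    (∑ j ∈ Finset.range (2*p+ω.natAbs+1),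
        if (2 * j : ℤ) = (2*p+ω.natAbs : ℕ) + ω then (((2*p+ω.natAbs : ℕ)).choose j : ℂ) else 0) =
      (((2*p+ω.natAbs : ℕ)).choose (p+ω.natAbs) : ℂ) := by
  rcases Int.natAbs_eq ω with hc | hc
  · have : ∀ j ∈ Finset.range (2*p+ω.natAbs+1),
        (if (2 * j : ℤ) = (2*p+ω.natAbs : ℕ) + ω then (((2*p+ω.natAbs : ℕ)).choose j : ℂ) else 0) =
        (if j = p + ω.natAbs then (((2*p+ω.natAbs : ℕ)).choose j : ℂ) else 0) := by
      intro j hj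
      apply if_congr _ rfl rfl
      constructor <;> (intro h; omega)
    rw [Finset.sum_congr rfl this, Finset.sum_ite_eq' (Finset.range (2*p+ω.natAbs+1))]
    rw [if_pos (Finset.mem_range.mpr (by omega))]
  · have : ∀ j ∈ Finset.range (2*p+ω.natAbs+1),
        (if (2 * j : ℤ) = (2*p+ω.natAbs : ℕ) + ω then (((2*p+ω.natAbs : ℕ)).choose j : ℂ) else 0) =
        (if j = p then (((2*p+ω.natAbs : ℕ)).choose j : ℂ) else 0) := by
      intro j hj
      apply if_congr _ rfl rfl
      constructor <;> (intro h; omega)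
    rw [Finset.sum_congr rfl this, Finset.sum_ite_eq' (Finset.range (2*p+ω.natAbs+1))]
    rw [if_pos (Finset.mem_range.mpr (by omega))]
    congr 1
    have h := Nat.choose_symm (by omega : p + ω.natAbs ≤ 2*p + ω.natAbs)
    rw [show 2*p+ω.natAbs - (p+ω.natAbs) = p by omega] at h
    rw [h]

lemma termEq (a : ℝ) (ω : ℤ) (p : ℕ) :
    ((a:ℂ)^(2*p+ω.natAbs) / (((2*p+ω.natAbs : ℕ)).factorial : ℂ)) *
      ((((2*p+ω.natAbs : ℕ)).choose (p+ω.natAbs) : ℂ) / 2 ^ (2*p+ω.natAbs)) =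
    ((a:ℂ) / 2) ^ (2 * p + ω.natAbs) /
      ((p.factorial : ℂ) * ((p + ω.natAbs).factorial : ℂ)) := by
  rw [Nat.cast_choose ℂ (by omega : p + ω.natAbs ≤ 2*p + ω.natAbs)]
  rw [show 2*p+ω.natAbs - (p+ω.natAbs) = p by omega]
  have h1 : (((2*p+ω.natAbs : ℕ)).factorial : ℂ) ≠ 0 := by exact_mod_cast (Nat.factorial_ne_zero _)
  have h2 : ((p.factorial : ℕ) : ℂ) ≠ 0 := by exact_mod_cast (Nat.factorial_ne_zero _)
  have h3 : (((p+ω.natAbs).factorial : ℕ) : ℂ) ≠ 0 := by exact_mod_cast (Nat.factorial_ne_zero _)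
  field_simp
  ring_nf
  have e : ((1:ℂ)/2)^(p*2) * 2^(p*2) = 1 := by rw [← mul_pow]; norm_num
  have e2 : ((1:ℂ)/2)^ω.natAbs * 2^ω.natAbs = 1 := by rw [← mul_pow]; norm_num
  linear_combination (-((a:ℂ)^(p*2) * (a:ℂ)^ω.natAbs) * ((1:ℂ)/2)^ω.natAbs * 2^ω.natAbs) * e - ((a:ℂ)^(p*2) * (a:ℂ)^ω.natAbs) * e2

lemma core (a : ℝ) (ω : ℤ) :
    (∫ x in (0:ℝ)..1, ((Real.exp (a * Real.cos (2 * Real.pi * x)) : ℝ) : ℂ) *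
        Complex.exp (-(2 * Real.pi * Complex.I * (ω:ℂ) * (x:ℂ)))) =
      ((besselI ω.natAbs a : ℝ) : ℂ) := by
  set F : ℕ → ℝ → ℂ := fun k x =>
    ((a:ℂ)^k / (k.factorial : ℂ)) * ((Real.cos (2 * Real.pi * x) : ℝ) : ℂ)^k *
      Complex.exp (-(2 * Real.pi * Complex.I * (ω:ℂ) * (x:ℂ))) with hF
  have hpt : ∀ x : ℝ,
      ((Real.exp (a * Real.cos (2 * Real.pi * x)) : ℝ) : ℂ) *
        Complex.exp (-(2 * Real.pi * Complex.I * (ω:ℂ) * (x:ℂ))) = ∑' k, F k x := by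
    intro x
    have he : Real.exp (a * Real.cos (2 * Real.pi * x)) =
        ∑' k : ℕ, (a * Real.cos (2 * Real.pi * x))^k / (k.factorial : ℝ) := by
      rw [Real.exp_eq_exp_ℝ, NormedSpace.exp_eq_tsum_div]
    rw [he, Complex.ofReal_tsum, ← tsum_mul_right]
    congr 1; ext k
    rw [hF]
    push_cast
    ring
  rw [intervalIntegral.integral_congr (g := fun x => ∑' k, F k x) (fun x _ => hpt x)]
  rw [intervalIntegral.integral_of_le (zero_le_one)]
  rw [MeasureTheory.integral_tsum]
  rotate_left
  · intro k
    apply Continuous.aestronglyMeasurable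
    rw [hF]; fun_prop
  · have hnorm : ∀ k x, ‖F k x‖ ≤ |a|^k / k.factorial := by
      intro k x
      rw [hF]
      simp only
      rw [norm_mul, norm_mul, Complex.norm_exp]
      have hre : ((-(2 * Real.pi * Complex.I * (ω:ℂ) * (x:ℂ)))).re = 0 := by
        simp [Complex.ext_iff]
      rw [hre, Real.exp_zero, mul_one, norm_div, norm_pow, norm_pow, Complex.norm_real,
        Complex.norm_real, Complex.norm_natCast]
      have h1 : ‖Real.cos (2 * Real.pi * x)‖ ≤ 1 := by
        rw [Real.norm_eq_abs]; exact Real.abs_cos_le_one _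
      calc ‖a‖^k / (k.factorial : ℝ) * ‖Real.cos (2 * Real.pi * x)‖^k
          ≤ ‖a‖^k / (k.factorial : ℝ) * 1 := by
            apply mul_le_mul_of_nonneg_left _ (by positivity)
            exact pow_le_one₀ (norm_nonneg _) h1
        _ = |a|^k / k.factorial := by rw [mul_one, Real.norm_eq_abs]
    have hbd : ∀ k, (∫⁻ x, ‖F k x‖₊ ∂(volume.restrict (Set.Ioc (0:ℝ) 1))) ≤
        ENNReal.ofReal (|a|^k / k.factorial) := by
      intro k
      calc ∫⁻ x, ‖F k x‖₊ ∂(volume.restrict (Set.Ioc (0:ℝ) 1))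
          ≤ ∫⁻ _, ENNReal.ofReal (|a|^k / k.factorial) ∂(volume.restrict (Set.Ioc (0:ℝ) 1)) := by
            apply MeasureTheory.lintegral_mono
            intro x
            dsimp only
            rw [← enorm_eq_nnnorm, ← ofReal_norm]
            exact ENNReal.ofReal_le_ofReal (hnorm k x)
        _ = ENNReal.ofReal (|a|^k / k.factorial) * volume (Set.Ioc (0:ℝ) 1) := by
            rw [MeasureTheory.lintegral_const, MeasureTheory.Measure.restrict_apply_univ]
        _ = ENNReal.ofReal (|a|^k / k.factorial) := by
            rw [Real.volume_Ioc]
            norm_num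
    refine ne_top_of_le_ne_top ?_ (ENNReal.tsum_le_tsum hbd)
    rw [← ENNReal.ofReal_tsum_of_nonneg (fun k => by positivity)
      (Real.summable_pow_div_factorial |a|)]
    exact ENNReal.ofReal_ne_top
  have hI : ∀ k : ℕ, (∫ x in Set.Ioc (0:ℝ) 1, F k x) =
      ((a:ℂ)^k / (k.factorial : ℂ)) *
        ((∑ j ∈ Finset.range (k+1),
          if (2 * j : ℤ) = k + ω then (k.choose j : ℂ) else 0) / 2 ^ k) := by
    intro k
    rw [← intervalIntegral.integral_of_le (zero_le_one), hF]
    simp only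
    rw [show (fun x : ℝ => ((a:ℂ)^k / (k.factorial : ℂ)) * ((Real.cos (2 * Real.pi * x) : ℝ) : ℂ)^k *
          Complex.exp (-(2 * Real.pi * Complex.I * (ω:ℂ) * (x:ℂ)))) =
        (fun x : ℝ => ((a:ℂ)^k / (k.factorial : ℂ)) * (((Real.cos (2 * Real.pi * x) : ℝ) : ℂ)^k *
          Complex.exp (-(2 * Real.pi * Complex.I * (ω:ℂ) * (x:ℂ))))) from funext fun x => by ring]
    rw [intervalIntegral.integral_const_mul, cospow]
  rw [tsum_congr hI, besselI_complex]
  apply tsum_eq_tsum_of_ne_zero_bij (fun p => 2 * (p : ℕ) + ω.natAbs)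
  · intro p q hpq
    simp only at hpq
    exact Subtype.ext (by omega)
  · intro k hk
    simp only [Function.mem_support] at hk
    have hsum : (∑ j ∈ Finset.range (k+1),
        if (2 * j : ℤ) = k + ω then (k.choose j : ℂ) else 0) ≠ 0 := by
      intro h0
      apply hk
      rw [h0]
      simp
    have ha : (a:ℂ)^k ≠ 0 := by
      intro h0
      apply hk
      rw [h0]
      simp
    have hex : ∃ j, j < k + 1 ∧ (2 * j : ℤ) = k + ω := by
      by_contra hcon
      push_neg at hcon
      apply hsum
      apply Finset.sum_eq_zero
      intro j hj
      rw [Finset.mem_range] at hj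
      exact if_neg (hcon j hj)
    obtain ⟨j, hj, hje⟩ := hex
    have hp : ∃ p : ℕ, k = 2 * p + ω.natAbs := by
      rcases Int.natAbs_eq ω with hc | hc
      · exact ⟨j - ω.natAbs, by omega⟩
      · exact ⟨j, by omega⟩
    obtain ⟨p, hp⟩ := hp
    refine ⟨⟨p, ?_⟩, hp.symm⟩
    rw [Function.mem_support]
    intro h0
    apply ha
    have hfac : ((p.factorial : ℂ) * (((p+ω.natAbs).factorial : ℕ) : ℂ)) ≠ 0 :=
      mul_ne_zero (by exact_mod_cast (Nat.factorial_ne_zero _))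
        (by exact_mod_cast (Nat.factorial_ne_zero _))
    have h2 : ((a:ℂ)/2)^(2*p+ω.natAbs) = 0 := by
      rcases div_eq_zero_iff.mp h0 with h | h
      · exact h
      · exact absurd h hfac
    obtain ⟨hz, hkne⟩ := pow_eq_zero_iff'.mp h2
    have haz : (a:ℂ) = 0 := by
      rcases div_eq_zero_iff.mp hz with h | h
      · exact h
      · norm_num at h
    rw [hp, haz, zero_pow (by omega)]
  · intro ⟨p, hp⟩
    simp only
    rw [innerSum, termEq]

lemma shift (a c : ℝ) (ω : ℤ) :
    (∫ x in (0:ℝ)..1, ((Real.exp (a * Real.cos (2 * Real.pi * (x - c))) : ℝ) : ℂ) *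
        Complex.exp (-(2 * Real.pi * Complex.I * (ω:ℂ) * (x:ℂ)))) =
      Complex.exp (-(2 * Real.pi * Complex.I * (ω:ℂ) * (c:ℂ))) *
        ∫ x in (0:ℝ)..1, ((Real.exp (a * Real.cos (2 * Real.pi * x)) : ℝ) : ℂ) *
          Complex.exp (-(2 * Real.pi * Complex.I * (ω:ℂ) * (x:ℂ))) := by
  let f : ℝ → ℂ := fun x => ((Real.exp (a * Real.cos (2 * Real.pi * (x - c))) : ℝ) : ℂ) *
      Complex.exp (-(2 * Real.pi * Complex.I * (ω:ℂ) * (x:ℂ)))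
  show (∫ x in (0:ℝ)..1, f x) = _
  have hper : Function.Periodic f 1 := by
    intro x
    show ((Real.exp (a * Real.cos (2 * Real.pi * (x + 1 - c))) : ℝ) : ℂ) *
        Complex.exp (-(2 * Real.pi * Complex.I * (ω:ℂ) * (((x + 1 : ℝ)):ℂ))) =
      ((Real.exp (a * Real.cos (2 * Real.pi * (x - c))) : ℝ) : ℂ) *
        Complex.exp (-(2 * Real.pi * Complex.I * (ω:ℂ) * (x:ℂ)))
    rw [show 2 * Real.pi * (x + 1 - c) = 2 * Real.pi * (x - c) + 2 * Real.pi by ring,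
      Real.cos_add_two_pi, Complex.ofReal_add, Complex.ofReal_one,
      show (-(2 * Real.pi * Complex.I * (ω:ℂ) * ((x:ℂ) + 1))) =
          -(2 * Real.pi * Complex.I * (ω:ℂ) * (x:ℂ)) + (-ω : ℤ) * (2 * Real.pi * Complex.I) by
        push_cast; ring,
      Complex.exp_add, Complex.exp_int_mul_two_pi_mul_I, mul_one]
  have h1 : (∫ x in (0:ℝ)..1, f x) = ∫ x in c..(c+1), f x := by
    have := hper.intervalIntegral_add_eq 0 c
    simpa using this
  have h2 : (∫ x in c..(c+1), f x) = ∫ x in (0:ℝ)..1, f (x + c) := by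
    rw [intervalIntegral.integral_comp_add_right f c]
    norm_num [add_comm]
  have h3 : ∀ x : ℝ, f (x + c) =
      Complex.exp (-(2 * Real.pi * Complex.I * (ω:ℂ) * (c:ℂ))) *
        (((Real.exp (a * Real.cos (2 * Real.pi * x)) : ℝ) : ℂ) *
          Complex.exp (-(2 * Real.pi * Complex.I * (ω:ℂ) * (x:ℂ)))) := by
    intro x
    show ((Real.exp (a * Real.cos (2 * Real.pi * (x + c - c))) : ℝ) : ℂ) *
        Complex.exp (-(2 * Real.pi * Complex.I * (ω:ℂ) * (((x + c : ℝ)):ℂ))) = _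
    rw [show x + c - c = x by ring]
    rw [Complex.ofReal_add]
    rw [show (-(2 * Real.pi * Complex.I * (ω:ℂ) * ((x:ℂ) + (c:ℂ)))) =
        (-(2 * Real.pi * Complex.I * (ω:ℂ) * (c:ℂ))) +
          (-(2 * Real.pi * Complex.I * (ω:ℂ) * (x:ℂ))) by ring]
    rw [Complex.exp_add]
    ring
  calc (∫ x in (0:ℝ)..1, f x) = ∫ x in (0:ℝ)..1, f (x + c) := by rw [h1, h2]
    _ = ∫ x in (0:ℝ)..1, Complex.exp (-(2 * Real.pi * Complex.I * (ω:ℂ) * (c:ℂ))) *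
        (((Real.exp (a * Real.cos (2 * Real.pi * x)) : ℝ) : ℂ) *
          Complex.exp (-(2 * Real.pi * Complex.I * (ω:ℂ) * (x:ℂ)))) := by
        exact intervalIntegral.integral_congr fun x _ => h3 x
    _ = _ := intervalIntegral.integral_const_mul _ _

/-- the `ω`-th Fourier coefficient in `x` of `x ↦ K_s(x,y)K_s(x,z)`, where
`K_s(x,y) = e^{s(cos 2π(x-y) - 1)}`, equals `e^{-2s} I_{|ω|}(2s cos(π(y-z))) e^{-iπω(y+z)}`. -/
theorem stmt10 (s : ℝ) (hs : 0 < s) (y z : ℝ) (ω : ℤ) :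
    (∫ x in (0:ℝ)..1,
      ((Real.exp (s * (Real.cos (2 * Real.pi * (x - y)) - 1)) *
        Real.exp (s * (Real.cos (2 * Real.pi * (x - z)) - 1)) : ℝ) : ℂ) *
        Complex.exp (-(2 * Real.pi * Complex.I * (ω : ℂ) * (x : ℂ)))) =
    ((Real.exp (-(2 * s)) * besselI ω.natAbs (2 * s * Real.cos (Real.pi * (y - z))) : ℝ) : ℂ) *
      Complex.exp (-(Real.pi * Complex.I * (ω : ℂ) * ((y : ℂ) + (z : ℂ)))) := by
  set a : ℝ := 2 * s * Real.cos (Real.pi * (y - z)) with ha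
  set c : ℝ := (y + z) / 2 with hc
  have key : ∀ x : ℝ,
      Real.exp (s * (Real.cos (2 * Real.pi * (x - y)) - 1)) *
        Real.exp (s * (Real.cos (2 * Real.pi * (x - z)) - 1)) =
      Real.exp (-(2*s)) * Real.exp (a * Real.cos (2 * Real.pi * (x - c))) := by
    intro x
    rw [← Real.exp_add, ← Real.exp_add]
    congr 1
    have hcc := Real.cos_add_cos (2 * Real.pi * (x - y)) (2 * Real.pi * (x - z))
    rw [show (2 * Real.pi * (x - y) + 2 * Real.pi * (x - z)) / 2 = 2 * Real.pi * (x - c) by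
        rw [hc]; ring,
      show (2 * Real.pi * (x - y) - 2 * Real.pi * (x - z)) / 2 = -(Real.pi * (y - z)) by ring,
      Real.cos_neg] at hcc
    rw [ha]
    nlinarith [hcc]
  have hint : ∀ x : ℝ,
      ((Real.exp (s * (Real.cos (2 * Real.pi * (x - y)) - 1)) *
        Real.exp (s * (Real.cos (2 * Real.pi * (x - z)) - 1)) : ℝ) : ℂ) *
        Complex.exp (-(2 * Real.pi * Complex.I * (ω : ℂ) * (x : ℂ))) =
      ((Real.exp (-(2*s)) : ℝ) : ℂ) *
        (((Real.exp (a * Real.cos (2 * Real.pi * (x - c))) : ℝ) : ℂ) *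
          Complex.exp (-(2 * Real.pi * Complex.I * (ω : ℂ) * (x : ℂ)))) := by
    intro x
    rw [key x]
    push_cast
    ring
  rw [intervalIntegral.integral_congr (fun x _ => hint x),
    intervalIntegral.integral_const_mul, shift, core]
  have hexp : Complex.exp (-(2 * Real.pi * Complex.I * (ω:ℂ) * (c:ℂ))) =
      Complex.exp (-(Real.pi * Complex.I * (ω : ℂ) * ((y : ℂ) + (z : ℂ)))) := by
    congr 1
    rw [hc]
    push_cast
    ring
  rw [hexp]
  push_cast
  ring
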